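/- If the series ∑_{n=1}^∞ 1/(n^3 · sin(n)^2) converges, then for every real k > 5/2, the inequality |π − p/q| < 1/q^k has only finitely many coprime positive integer solutions (p, q); that is, the irrationality measure of π is at most 5/2. -/

import Mathlib

/-!
If `|π - p/q| < q^(-k)` then `|sin p| = |sin (p - qπ)| ≤ |p - qπ| < q^(1-k)`, and `p < 5q`, so
`p³ sin² p ≤ 125 q^(5-2k)`, which tends to `0` when `k > 5/2`. The terms `1/(p³ sin² p)` of a
convergent series are eventually below `1`, so every solution with large `p` has small `q`;
since `q < p < 5q`, all solutions lie in a finite box.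
-/

open Real Filter Set

theorem sin_natCast_ne_zero {n : ℕ} (hn : n ≠ 0) : sin n ≠ 0 := by
  refine sin_ne_zero_iff.mpr fun m hm => ?_
  have hm0 : m ≠ 0 := by
    rintro rfl
    simp [eq_comm, hn] at hm
  exact (irrational_pi.intCast_mul hm0).ne_nat n hm

theorem abs_sin_le_abs_sub_int_mul_pi (x : ℝ) (n : ℤ) : |sin x| ≤ |x - n * π| :=
  calc |sin x| = |sin (x - n * π)| := by simp [sin_sub_int_mul_pi, abs_mul]
    _ ≤ |x - n * π| := abs_sin_le_abs

theorem lt_and_lt_five_mul_of_abs_pi_sub_div_lt {p k : ℝ} {q : ℕ} (hq : 0 < q) (hk : 0 ≤ k)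
    (h : |π - p / q| < 1 / (q : ℝ) ^ k) : (q : ℝ) < p ∧ p < 5 * q := by
  have hq' : (0 : ℝ) < q := Nat.cast_pos.mpr hq
  have h_one : 1 / (q : ℝ) ^ k ≤ 1 :=
    div_le_one_of_le₀ (one_le_rpow (Nat.one_le_cast.mpr hq) hk) (rpow_nonneg hq'.le k)
  obtain ⟨hlow, hupp⟩ := abs_lt.mp (h.trans_le h_one)
  refine ⟨(one_lt_div hq').mp ?_, (div_lt_iff₀ hq').mp ?_⟩ <;> linarith [pi_gt_three, pi_lt_four]

theorem abs_sin_lt_rpow_of_abs_pi_sub_div_lt {p k : ℝ} {q : ℕ} (hq : 0 < q)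
    (h : |π - p / q| < 1 / (q : ℝ) ^ k) : |sin p| < (q : ℝ) ^ (1 - k) := by
  have hq' : (0 : ℝ) < q := Nat.cast_pos.mpr hq
  calc |sin p| ≤ |p - (q : ℤ) * π| := abs_sin_le_abs_sub_int_mul_pi p q
    _ = |q * (π - p / q)| := by
      rw [abs_sub_comm, Int.cast_natCast, mul_sub, mul_div_cancel₀ _ hq'.ne']
    _ = q * |π - p / q| := by rw [abs_mul, abs_of_pos hq']
    _ < q * (1 / (q : ℝ) ^ k) := mul_lt_mul_of_pos_left h hq'
    _ = (q : ℝ) ^ (1 - k) := by rw [rpow_sub hq', rpow_one, mul_one_div]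

theorem pow_three_mul_sin_sq_le_of_abs_pi_sub_div_lt {p k : ℝ} {q : ℕ} (hq : 0 < q) (hk : 0 ≤ k)
    (h : |π - p / q| < 1 / (q : ℝ) ^ k) : p ^ 3 * sin p ^ 2 ≤ 125 * (q : ℝ) ^ (5 - 2 * k) := by
  have hq' : (0 : ℝ) < q := Nat.cast_pos.mpr hq
  obtain ⟨hqp, hp5⟩ := lt_and_lt_five_mul_of_abs_pi_sub_div_lt hq hk h
  have hsin : sin p ^ 2 ≤ (q : ℝ) ^ (2 - 2 * k) := by
    rw [← sq_abs, show 2 - 2 * k = (1 - k) * (2 : ℕ) by push_cast; ring, rpow_mul_natCast hq'.le]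
    exact pow_le_pow_left₀ (abs_nonneg _) (abs_sin_lt_rpow_of_abs_pi_sub_div_lt hq h).le 2
  calc p ^ 3 * sin p ^ 2 ≤ (5 * q) ^ 3 * (q : ℝ) ^ (2 - 2 * k) :=
        mul_le_mul (pow_le_pow_left₀ (by linarith) hp5.le 3) hsin (sq_nonneg _) (by positivity)
    _ = 125 * (q : ℝ) ^ (5 - 2 * k) := by
      rw [show 5 - 2 * k = (3 : ℕ) + (2 - 2 * k) by push_cast; ring, rpow_add hq', rpow_natCast]
      ring

open Real in
theorem flint_hills_implies_mu_le (hsum : Summable (fun n : ℕ => 1 / ((n : ℝ) ^ 3 * Real.sin n ^ 2))) :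
    ∀ k : ℝ, 5 / 2 < k →
      {pq : ℕ × ℕ | 0 < pq.1 ∧ 0 < pq.2 ∧ Nat.Coprime pq.1 pq.2 ∧
        |π - (pq.1 : ℝ) / (pq.2 : ℝ)| < 1 / (pq.2 : ℝ) ^ k}.Finite := by
  intro k hk
  obtain ⟨N, hN⟩ := eventually_atTop.mp (hsum.tendsto_atTop_zero.eventually (gt_mem_nhds one_pos))
  have h_decay : Tendsto (fun q : ℕ => 125 * (q : ℝ) ^ (5 - 2 * k)) atTop (nhds 0) := by
    simpa using ((tendsto_rpow_neg_atTop (by linarith : 0 < 2 * k - 5)).comp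
      tendsto_natCast_atTop_atTop).const_mul 125
  obtain ⟨Q, hQ⟩ := eventually_atTop.mp (h_decay.eventually (gt_mem_nhds one_pos))
  refine ((finite_Iic (N + 5 * Q)).prod (finite_Iic (N + 5 * Q))).subset ?_
  rintro ⟨p, q⟩ ⟨hp, hq, -, h⟩
  have h_small : p < N ∨ q < Q := by
    by_contra! ⟨hpN, hqQ⟩
    have h_term := (div_lt_one (mul_pos (pow_pos (Nat.cast_pos.mpr hp) 3)
      (sq_pos_of_ne_zero (sin_natCast_ne_zero hp.ne')))).mp (hN p hpN)
    linarith [pow_three_mul_sin_sq_le_of_abs_pi_sub_div_lt hq (by linarith) h, hQ q hqQ]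
  obtain ⟨hqp, hp5⟩ := lt_and_lt_five_mul_of_abs_pi_sub_div_lt hq (by linarith) h
  have hqp : q < p := by exact_mod_cast hqp
  have hp5 : p < 5 * q := by exact_mod_cast hp5
  constructor <;> simp only [mem_Iic] <;> omega
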